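/- Heins' rigidity: if ρ is a conformal metric density on 𝔻 with curvature ≤ −1 everywhere (where ρ > 0), and there exists z₀ ∈ 𝔻 with ρ(z₀) = 2/(1 − |z₀|²), then ρ(z) = 2/(1 − |z|²) for all z ∈ 𝔻. -/

import Mathlib

open Metric Complex

/-- The planar Laplacian ∂²/∂x² + ∂²/∂y² of a function `g : ℂ → ℝ`. -/
noncomputable def planarLaplacian (g : ℂ → ℝ) (z : ℂ) : ℝ :=
  deriv (deriv (fun x : ℝ => g (x + z.im * Complex.I))) z.re +
    deriv (deriv (fun y : ℝ => g (z.re + y * Complex.I))) z.im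

/-!
The Ahlfors–Schwarz lemma, applied on the discs of radius `r < 1` (at a maximum of
`ρ · (r² - |z|²)` the curvature bound forces `ρ ≤ λᵣ`) and letting `r → 1`, gives `ρ ≤ λ`.
Hence `v = log λ - log ρ ≥ 0` where `ρ > 0`, and the two curvature identities give
`Δv ≤ λ² - ρ² ≤ 2λ² v`. A strong minimum principle for such supersolutions, proved with Hopf's
Gaussian barrier on an annulus, shows that the zero set `{ρ = λ}` of `v` is open. It is also
relatively closed and contains `z₀`, so it is the whole disc.
-/

open Filter Topology Set

section OneVariable

variable {f : ℝ → ℝ} {a : ℝ}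

theorem IsLocalMax.deriv_deriv_nonpos (h : IsLocalMax f a) (hc : ContinuousAt f a) :
    deriv (deriv f) a ≤ 0 := by
  -- Otherwise `a` would also be a local minimum, so `f` would be locally constant.
  by_contra! hpos
  have hmin := isLocalMin_of_deriv_deriv_pos hpos h.deriv_eq_zero hc
  have hconst : f =ᶠ[𝓝 a] fun _ => f a := (hmin.and h).mono fun _ hx => le_antisymm hx.2 hx.1
  simp [hconst.deriv.deriv_eq] at hpos

theorem IsLocalMin.deriv_deriv_nonneg (h : IsLocalMin f a) (hc : ContinuousAt f a) :
    0 ≤ deriv (deriv f) a := by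
  by_contra! hneg
  have hmax := isLocalMax_of_deriv_deriv_neg hneg h.deriv_eq_zero hc
  have hconst : f =ᶠ[𝓝 a] fun _ => f a := (h.and hmax).mono fun _ hx => le_antisymm hx.2 hx.1
  simp [hconst.deriv.deriv_eq] at hneg

theorem deriv_deriv_eq_iteratedDeriv_two (f : ℝ → ℝ) : deriv (deriv f) = iteratedDeriv 2 f := by
  rw [iteratedDeriv_succ, iteratedDeriv_one]

theorem deriv_deriv_comp_sq_add {F F' : ℝ → ℝ} {F'' b x₀ : ℝ}
    (hF : ∀ᶠ t in 𝓝 ((x₀ - a) ^ 2 + b), HasDerivAt F (F' t) t)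
    (hF' : HasDerivAt F' F'' ((x₀ - a) ^ 2 + b)) :
    deriv (deriv fun x => F ((x - a) ^ 2 + b)) x₀ =
      2 * F' ((x₀ - a) ^ 2 + b) + 4 * (x₀ - a) ^ 2 * F'' := by
  have hq : ∀ x, HasDerivAt (fun x => (x - a) ^ 2 + b) (2 * (x - a)) x := fun x => by
    simpa using (((hasDerivAt_id x).sub_const a).pow 2).add_const b
  have hderiv : deriv (fun x => F ((x - a) ^ 2 + b)) =ᶠ[𝓝 x₀]
      fun x => F' ((x - a) ^ 2 + b) * (2 * (x - a)) := by
    filter_upwards [(hq x₀).continuousAt.eventually hF] with x hx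
    exact (hx.comp x (hq x)).deriv
  have hlin : HasDerivAt (fun x => 2 * (x - a)) 2 x₀ := by
    simpa using ((hasDerivAt_id x₀).sub_const a).const_mul 2
  have hcomp : HasDerivAt (fun x => F' ((x - a) ^ 2 + b)) (F'' * (2 * (x₀ - a))) x₀ :=
    hF'.comp x₀ (hq x₀)
  rw [hderiv.deriv_eq, (hcomp.fun_mul hlin).deriv]
  ring

theorem HasDerivAt.nonneg_of_eventually_le_right {L : ℝ} (hf : HasDerivAt f L a)
    (hle : ∀ᶠ t in 𝓝[>] a, f a ≤ f t) : 0 ≤ L := by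
  refine ge_of_tendsto ((hasDerivAt_iff_tendsto_slope.1 hf).mono_left
    (nhdsGT_le_nhdsNE a)) ?_
  filter_upwards [hle, self_mem_nhdsWithin] with t ht hat
  rw [slope_def_field]
  exact div_nonneg (sub_nonneg.2 ht) (sub_nonneg.2 (le_of_lt hat))

end OneVariable

theorem sq_sub_sq_le_two_mul_sq_mul_log_sub_log {a b : ℝ} (ha : 0 < a) (hb : 0 < b) :
    a ^ 2 - b ^ 2 ≤ 2 * a ^ 2 * (Real.log a - Real.log b) := by
  have hexp : Real.exp (2 * (Real.log b - Real.log a)) = (b / a) ^ 2 := by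
    rw [two_mul, Real.exp_add, Real.exp_sub, Real.exp_log ha, Real.exp_log hb, sq]
  have := Real.add_one_le_exp (2 * (Real.log b - Real.log a))
  rw [hexp, div_pow, le_div_iff₀ (by positivity)] at this
  nlinarith

theorem IsPreconnected.eqOn_of_isOpen_setOf_eq {X Y : Type*} [TopologicalSpace X]
    [TopologicalSpace Y] [T2Space Y] {s : Set X} {f g : X → Y} (hs : IsPreconnected s)
    (hso : IsOpen s) (hf : ContinuousOn f s) (hg : ContinuousOn g s)
    (hU : IsOpen {x ∈ s | f x = g x}) {x₀ : X} (hx₀ : x₀ ∈ s) (h₀ : f x₀ = g x₀) :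
    EqOn f g s := by
  have hV : IsOpen (s ∩ (fun x => (f x, g x)) ⁻¹' (diagonal Y)ᶜ) :=
    (hf.prodMk hg).isOpen_inter_preimage hso isClosed_diagonal.isOpen_compl
  intro x hx
  refine (hs.subset_left_of_subset_union hU hV ?_ ?_ ⟨x₀, hx₀, hx₀, h₀⟩ hx).2
  · exact disjoint_left.2 fun y hyU hyV => hyV.2 hyU.2
  · exact fun y hy => (eq_or_ne (f y) (g y)).imp (⟨hy, ·⟩) fun hne => ⟨hy, hne⟩

section PlanarLaplacian

variable {f g : ℂ → ℝ} {z : ℂ}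

theorem contDiff_ofReal_add_mul_I {n : WithTop ℕ∞} (b : ℝ) :
    ContDiff ℝ n fun x : ℝ => (x : ℂ) + b * I :=
  ofRealCLM.contDiff.add contDiff_const

theorem contDiff_add_ofReal_mul_I {n : WithTop ℕ∞} (a : ℝ) :
    ContDiff ℝ n fun y : ℝ => (a : ℂ) + y * I :=
  contDiff_const.add (ofRealCLM.contDiff.mul contDiff_const)

theorem planarLaplacian_nonpos_of_isLocalMax (hc : ContinuousAt g z) (h : IsLocalMax g z) :
    planarLaplacian g z ≤ 0 := by
  rw [← re_add_im z] at hc h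
  have hx := (contDiff_ofReal_add_mul_I (n := 0) z.im).continuous.continuousAt (x := z.re)
  have hy := (contDiff_add_ofReal_mul_I (n := 0) z.re).continuous.continuousAt (x := z.im)
  exact add_nonpos ((h.comp_continuous (b := z.re) hx).deriv_deriv_nonpos (hc.comp_of_eq hx rfl))
    ((h.comp_continuous (b := z.im) hy).deriv_deriv_nonpos (hc.comp_of_eq hy rfl))

theorem planarLaplacian_nonneg_of_isLocalMin (hc : ContinuousAt g z) (h : IsLocalMin g z) :
    0 ≤ planarLaplacian g z := by
  rw [← re_add_im z] at hc h
  have hx := (contDiff_ofReal_add_mul_I (n := 0) z.im).continuous.continuousAt (x := z.re)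
  have hy := (contDiff_add_ofReal_mul_I (n := 0) z.re).continuous.continuousAt (x := z.im)
  exact add_nonneg ((h.comp_continuous (b := z.re) hx).deriv_deriv_nonneg (hc.comp_of_eq hx rfl))
    ((h.comp_continuous (b := z.im) hy).deriv_deriv_nonneg (hc.comp_of_eq hy rfl))

theorem planarLaplacian_sub (hf : ContDiffAt ℝ 2 f z) (hg : ContDiffAt ℝ 2 g z) :
    planarLaplacian (fun w => f w - g w) z = planarLaplacian f z - planarLaplacian g z := by
  rw [← re_add_im z] at hf hg
  have hx := (contDiff_ofReal_add_mul_I (n := 2) z.im).contDiffAt (x := z.re)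
  have hy := (contDiff_add_ofReal_mul_I (n := 2) z.re).contDiffAt (x := z.im)
  simp only [planarLaplacian, deriv_deriv_eq_iteratedDeriv_two]
  rw [iteratedDeriv_fun_sub (f := fun x : ℝ => f (x + z.im * I))
      (g := fun x : ℝ => g (x + z.im * I)) (hf.comp z.re hx) (hg.comp z.re hx),
    iteratedDeriv_fun_sub (f := fun y : ℝ => f (z.re + y * I))
      (g := fun y : ℝ => g (z.re + y * I)) (hf.comp z.im hy) (hg.comp z.im hy)]
  ring

theorem norm_sub_sq_eq_re_im (w p : ℂ) : ‖w - p‖ ^ 2 = (w.re - p.re) ^ 2 + (w.im - p.im) ^ 2 := by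
  rw [Complex.sq_norm, normSq_apply, sub_re, sub_im]
  ring

theorem planarLaplacian_comp_norm_sub_sq {F F' : ℝ → ℝ} {F'' : ℝ} {p : ℂ}
    (hF : ∀ᶠ t in 𝓝 (‖z - p‖ ^ 2), HasDerivAt F (F' t) t)
    (hF' : HasDerivAt F' F'' (‖z - p‖ ^ 2)) :
    planarLaplacian (fun w => F (‖w - p‖ ^ 2)) z =
      4 * (F' (‖z - p‖ ^ 2) + ‖z - p‖ ^ 2 * F'') := by
  rw [norm_sub_sq_eq_re_im] at hF hF' ⊢
  have hF₂ := add_comm ((z.re - p.re) ^ 2) ((z.im - p.im) ^ 2) ▸ hF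
  have hF'₂ := add_comm ((z.re - p.re) ^ 2) ((z.im - p.im) ^ 2) ▸ hF'
  have hy : (fun y : ℝ => F (‖(z.re : ℂ) + y * I - p‖ ^ 2)) =
      fun y => F ((y - p.im) ^ 2 + (z.re - p.re) ^ 2) := by
    ext y
    simp [norm_sub_sq_eq_re_im, add_comm]
  have hx : (fun x : ℝ => F (‖(x : ℂ) + z.im * I - p‖ ^ 2)) =
      fun x => F ((x - p.re) ^ 2 + (z.im - p.im) ^ 2) := by
    ext x
    simp [norm_sub_sq_eq_re_im]
  rw [planarLaplacian, hx, hy, deriv_deriv_comp_sq_add hF hF', deriv_deriv_comp_sq_add hF₂ hF'₂,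
    add_comm ((z.im - p.im) ^ 2)]
  ring

end PlanarLaplacian

noncomputable def hyperbolicDensity (R : ℝ) (z : ℂ) : ℝ :=
  2 * R / (R ^ 2 - ‖z‖ ^ 2)

section HyperbolicDensity

variable {R : ℝ} {z : ℂ}

theorem sq_norm_lt_sq_of_mem_ball (hz : z ∈ ball (0 : ℂ) R) : ‖z‖ ^ 2 < R ^ 2 := by
  rw [mem_ball_zero_iff] at hz
  exact pow_lt_pow_left₀ hz (norm_nonneg z) two_ne_zero

theorem hyperbolicDensity_pos (hR : 0 < R) (hz : z ∈ ball (0 : ℂ) R) :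
    0 < hyperbolicDensity R z :=
  div_pos (by positivity) (sub_pos.2 (sq_norm_lt_sq_of_mem_ball hz))

theorem hyperbolicDensity_one (z : ℂ) : hyperbolicDensity 1 z = 2 / (1 - ‖z‖ ^ 2) := by
  simp [hyperbolicDensity]

theorem log_sub_log_hyperbolicDensity {a : ℝ} (hR : 0 < R) (hz : z ∈ ball (0 : ℂ) R)
    (ha : 0 < a) :
    Real.log a - Real.log (hyperbolicDensity R z) =
      Real.log (a * (R ^ 2 - ‖z‖ ^ 2)) - Real.log (2 * R) := by
  have hz' := sub_pos.2 (sq_norm_lt_sq_of_mem_ball hz)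
  rw [hyperbolicDensity, Real.log_mul ha.ne' hz'.ne', Real.log_div (by positivity) hz'.ne']
  ring

theorem continuousOn_hyperbolicDensity :
    ContinuousOn (hyperbolicDensity R) (ball (0 : ℂ) R) :=
  continuousOn_const.div (by fun_prop) fun _ hz => (sub_pos.2 (sq_norm_lt_sq_of_mem_ball hz)).ne'

theorem contDiffAt_log_hyperbolicDensity (hR : 0 < R) (hz : z ∈ ball (0 : ℂ) R) :
    ContDiffAt ℝ 2 (fun w => Real.log (hyperbolicDensity R w)) z :=
  (contDiffAt_const.div (contDiffAt_const.sub (contDiff_norm_sq ℝ).contDiffAt)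
    (sub_pos.2 (sq_norm_lt_sq_of_mem_ball hz)).ne').log (hyperbolicDensity_pos hR hz).ne'

theorem planarLaplacian_log_hyperbolicDensity (hR : 0 < R) (hz : z ∈ ball (0 : ℂ) R) :
    planarLaplacian (fun w => Real.log (hyperbolicDensity R w)) z = hyperbolicDensity R z ^ 2 := by
  have hderiv : ∀ t < R ^ 2,
      HasDerivAt (fun t => Real.log (2 * R / (R ^ 2 - t))) (R ^ 2 - t)⁻¹ t := fun t ht => by
    have hpos : 0 < R ^ 2 - t := sub_pos.2 ht
    have := ((hasDerivAt_const t (2 * R)).fun_div ((hasDerivAt_id' t).const_sub (R ^ 2))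
      hpos.ne').log (by positivity)
    convert this using 1
    field_simp
    ring
  have hderiv₂ : HasDerivAt (fun t => (R ^ 2 - t)⁻¹) (((R ^ 2 - ‖z‖ ^ 2) ^ 2)⁻¹) (‖z‖ ^ 2) := by
    refine ((hasDerivAt_id' _).const_sub (R ^ 2)).fun_inv
      (sub_pos.2 (sq_norm_lt_sq_of_mem_ball hz)).ne' |>.congr_deriv ?_
    ring
  have := planarLaplacian_comp_norm_sub_sq (p := 0)
    (eventually_lt_nhds (by simpa using sq_norm_lt_sq_of_mem_ball hz) |>.mono hderiv)
    (by simpa using hderiv₂)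
  simp only [sub_zero] at this
  have hpos := sub_pos.2 (sq_norm_lt_sq_of_mem_ball hz)
  simp only [hyperbolicDensity, this]
  field_simp
  ring

end HyperbolicDensity

section AhlforsSchwarz

variable {ρ : ℂ → ℝ} {R : ℝ}

theorem le_hyperbolicDensity_of_isLocalMax {p : ℂ} (hR : 0 < R) (hp : p ∈ ball (0 : ℂ) R)
    (hρ : 0 < ρ p) (hC2 : ContDiffAt ℝ 2 ρ p)
    (hcurv : ρ p ^ 2 ≤ planarLaplacian (fun w => Real.log (ρ w)) p)
    (hmax : IsLocalMax (fun w => Real.log (ρ w) - Real.log (hyperbolicDensity R w)) p) :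
    ρ p ≤ hyperbolicDensity R p := by
  have hlogρ := hC2.log hρ.ne'
  have hΔ := planarLaplacian_nonpos_of_isLocalMax
    (hlogρ.sub (contDiffAt_log_hyperbolicDensity hR hp)).continuousAt hmax
  rw [planarLaplacian_sub hlogρ (contDiffAt_log_hyperbolicDensity hR hp),
    planarLaplacian_log_hyperbolicDensity hR hp] at hΔ
  exact (pow_le_pow_iff_left₀ hρ.le (hyperbolicDensity_pos hR hp).le two_ne_zero).1
    (by linarith)

theorem le_hyperbolicDensity_of_closedBall (hR : 0 < R)
    (hcont : ContinuousOn ρ (closedBall (0 : ℂ) R))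
    (hC2 : ∀ z ∈ ball (0 : ℂ) R, 0 < ρ z → ContDiffAt ℝ 2 ρ z)
    (hcurv : ∀ z ∈ ball (0 : ℂ) R, 0 < ρ z →
      ρ z ^ 2 ≤ planarLaplacian (fun w => Real.log (ρ w)) z) :
    ∀ z ∈ ball (0 : ℂ) R, ρ z ≤ hyperbolicDensity R z := by
  set G : ℂ → ℝ := fun w => ρ w * (R ^ 2 - ‖w‖ ^ 2)
  obtain ⟨p, hp, hpmax⟩ := (isCompact_closedBall (0 : ℂ) R).exists_isMaxOn
    (nonempty_closedBall.2 hR.le)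
    (hcont.mul (continuous_const.sub (continuous_norm.pow 2)).continuousOn)
  suffices hGp : G p ≤ 2 * R by
    intro z hz
    rw [hyperbolicDensity, le_div_iff₀ (sub_pos.2 (sq_norm_lt_sq_of_mem_ball hz))]
    exact (hpmax (ball_subset_closedBall hz)).trans hGp
  by_contra! hGp
  have hfac : 0 ≤ R ^ 2 - ‖p‖ ^ 2 := by
    rw [mem_closedBall_zero_iff] at hp
    nlinarith [norm_nonneg p]
  have hρp : 0 < ρ p := pos_of_mul_pos_left (by simp only [G] at hGp; linarith) hfac
  have hpball : p ∈ ball (0 : ℂ) R := mem_ball_zero_iff.2 <|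
    (mem_closedBall_zero_iff.1 hp).lt_of_ne fun h => by
      simp only [G, h, sub_self, mul_zero] at hGp
      linarith
  refine (le_hyperbolicDensity_of_isLocalMax hR hpball hρp (hC2 p hpball hρp) (hcurv p hpball hρp)
    ?_).not_gt ?_
  · have hρev : ∀ᶠ w in 𝓝 p, 0 < ρ w :=
      continuousAt_const.eventually_lt (hcont.continuousAt (closedBall_mem_nhds_of_mem hpball)) hρp
    filter_upwards [hρev, isOpen_ball.mem_nhds hpball] with w hρw hw
    rw [log_sub_log_hyperbolicDensity hR hw hρw, log_sub_log_hyperbolicDensity hR hpball hρp]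
    exact sub_le_sub_right (Real.log_le_log (mul_pos hρw (sub_pos.2 (sq_norm_lt_sq_of_mem_ball hw)))
      (hpmax (ball_subset_closedBall hw))) _
  · rw [hyperbolicDensity, div_lt_iff₀ (sub_pos.2 (sq_norm_lt_sq_of_mem_ball hpball))]
    exact hGp

theorem le_hyperbolicDensity_of_curvature_le (hcont : ContinuousOn ρ (ball (0 : ℂ) R))
    (hC2 : ∀ z ∈ ball (0 : ℂ) R, 0 < ρ z → ContDiffAt ℝ 2 ρ z)
    (hcurv : ∀ z ∈ ball (0 : ℂ) R, 0 < ρ z →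
      ρ z ^ 2 ≤ planarLaplacian (fun w => Real.log (ρ w)) z) :
    ∀ z ∈ ball (0 : ℂ) R, ρ z ≤ hyperbolicDensity R z := by
  intro z hz
  have hzR := mem_ball_zero_iff.1 hz
  have hbound : ∀ r ∈ Ioo ‖z‖ R, ρ z ≤ hyperbolicDensity r z := fun r hr =>
    le_hyperbolicDensity_of_closedBall ((norm_nonneg z).trans_lt hr.1)
      (hcont.mono (closedBall_subset_ball hr.2))
      (fun w hw => hC2 w (ball_subset_ball hr.2.le hw))
      (fun w hw => hcurv w (ball_subset_ball hr.2.le hw)) z (mem_ball_zero_iff.2 hr.1)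
  have hcontR : ContinuousAt (fun r => hyperbolicDensity r z) R :=
    (continuousAt_const.mul continuousAt_id).div (by fun_prop)
      (sub_pos.2 (sq_norm_lt_sq_of_mem_ball hz)).ne'
  exact le_of_tendsto_of_tendsto tendsto_const_nhds (hcontR.tendsto.mono_left nhdsWithin_le_nhds)
    (eventually_of_mem (Ioo_mem_nhdsLT hzR) hbound)

end AhlforsSchwarz

noncomputable def gaussianBarrier (p : ℂ) (α R : ℝ) (w : ℂ) : ℝ :=
  Real.exp (-α * ‖w - p‖ ^ 2) - Real.exp (-α * R ^ 2)

section GaussianBarrier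

variable {p : ℂ} {α R : ℝ}

theorem contDiff_gaussianBarrier {n : WithTop ℕ∞} : ContDiff ℝ n (gaussianBarrier p α R) :=
  ((contDiff_const.mul ((contDiff_norm_sq ℝ).comp (contDiff_id.sub contDiff_const))).exp).sub
    contDiff_const

theorem gaussianBarrier_eq_zero {w : ℂ} (hw : ‖w - p‖ = R) : gaussianBarrier p α R w = 0 := by
  rw [gaussianBarrier, hw, sub_self]

theorem gaussianBarrier_lt_one (hα : 0 ≤ α) (w : ℂ) : gaussianBarrier p α R w < 1 := by
  have : Real.exp (-α * ‖w - p‖ ^ 2) ≤ 1 := Real.exp_le_one_iff.2 (by nlinarith [sq_nonneg ‖w - p‖])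
  have := Real.exp_pos (-α * R ^ 2)
  rw [gaussianBarrier]
  linarith

theorem planarLaplacian_const_mul_gaussianBarrier (ε : ℝ) (z : ℂ) :
    planarLaplacian (fun w => ε * gaussianBarrier p α R w) z =
      4 * ε * α * (α * ‖z - p‖ ^ 2 - 1) * Real.exp (-α * ‖z - p‖ ^ 2) := by
  have hF : ∀ t, HasDerivAt (fun t => ε * (Real.exp (-α * t) - Real.exp (-α * R ^ 2)))
      (-(ε * α) * Real.exp (-α * t)) t := fun t => by
    have := (((hasDerivAt_id' t).const_mul (-α)).exp.sub_const (Real.exp (-α * R ^ 2))).const_mul ε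
    exact this.congr_deriv (by ring)
  have hF' : HasDerivAt (fun t => -(ε * α) * Real.exp (-α * t))
      (ε * α ^ 2 * Real.exp (-α * ‖z - p‖ ^ 2)) (‖z - p‖ ^ 2) := by
    have := ((hasDerivAt_id' (‖z - p‖ ^ 2)).const_mul (-α)).exp.const_mul (-(ε * α))
    exact this.congr_deriv (by ring)
  rw [show (fun w => ε * gaussianBarrier p α R w) =
      fun w => (fun t => ε * (Real.exp (-α * t) - Real.exp (-α * R ^ 2))) (‖w - p‖ ^ 2) from rfl,
    planarLaplacian_comp_norm_sub_sq (Eventually.of_forall hF) hF']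
  ring

end GaussianBarrier

section MinimumPrinciple

variable {v : ℂ → ℝ} {c : ℝ}

theorem gaussianBarrier_le_of_planarLaplacian_le {p : ℂ} {R α ε : ℝ} (hc : 0 ≤ c)
    (hα : 0 < α) (hαc : c ≤ α * (α * R ^ 2 - 4)) (hε : 0 < ε)
    (hC2 : ∀ z ∈ closedBall p R, ContDiffAt ℝ 2 v z) (hv0 : ∀ z ∈ closedBall p R, 0 ≤ v z)
    (hΔ : ∀ z ∈ closedBall p R, planarLaplacian v z ≤ c * v z)
    (hinner : ∀ z ∈ sphere p (R / 2), ε ≤ v z) :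
    ∀ z ∈ closedBall p R \ ball p (R / 2), ε * gaussianBarrier p α R z ≤ v z := by
  set A := closedBall p R \ ball p (R / 2)
  set h : ℂ → ℝ := fun w => v w - ε * gaussianBarrier p α R w
  rcases A.eq_empty_or_nonempty with hA | hA
  · simp [hA]
  have hB : ∀ w, ContDiffAt ℝ 2 (fun w => ε * gaussianBarrier p α R w) w := fun _ =>
    contDiffAt_const.mul contDiff_gaussianBarrier.contDiffAt
  have hcont : ContinuousOn h A := fun w hw =>
    ((hC2 w hw.1).sub (hB w)).continuousAt.continuousWithinAt
  obtain ⟨m, hmA, hmin⟩ := ((isCompact_closedBall p R).diff isOpen_ball).exists_isMinOn hA hcont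
  suffices 0 ≤ h m from fun z hz => sub_nonneg.1 (this.trans (hmin hz))
  by_contra! hneg
  have hm_outer : dist m p < R := by
    refine lt_of_le_of_ne hmA.1 fun hmR => hneg.not_ge ?_
    rw [dist_eq_norm] at hmR
    simpa only [h, gaussianBarrier_eq_zero hmR, mul_zero, sub_zero] using hv0 m hmA.1
  have hm_inner : R / 2 < dist m p := by
    refine lt_of_le_of_ne (not_lt.1 hmA.2) fun hmR => hneg.not_ge ?_
    have := mul_lt_mul_of_pos_left (gaussianBarrier_lt_one (p := p) (R := R) hα.le m) hε
    have := hinner m hmR.symm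
    simp only [h]
    linarith
  have hlocmin : IsLocalMin h m := hmin.isLocalMin <| mem_of_superset
    ((isOpen_ball.sdiff isClosed_closedBall).mem_nhds ⟨hm_outer, fun h' => hm_inner.not_ge h'⟩)
    fun x hx => ⟨ball_subset_closedBall hx.1, fun h' => hx.2 (ball_subset_closedBall h')⟩
  -- By `hαc`, at `m` the barrier term has Laplacian above `c ε exp (-α ‖m - p‖²) ≥ c v m ≥ Δv m`.
  have hΔh := planarLaplacian_nonneg_of_isLocalMin ((hC2 m hmA.1).sub (hB m)).continuousAt hlocmin
  rw [planarLaplacian_sub (hC2 m hmA.1) (hB m), planarLaplacian_const_mul_gaussianBarrier] at hΔh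
  have hs : R ^ 2 < 4 * ‖m - p‖ ^ 2 := by
    rw [← dist_eq_norm]
    nlinarith [dist_nonneg (x := m) (y := p)]
  have hE := Real.exp_pos (-α * ‖m - p‖ ^ 2)
  have hvm : v m < ε * Real.exp (-α * ‖m - p‖ ^ 2) := by
    have := Real.exp_pos (-α * R ^ 2)
    simp only [h, gaussianBarrier] at hneg
    nlinarith
  have hkey : c < 4 * α * (α * ‖m - p‖ ^ 2 - 1) := by nlinarith
  nlinarith [hΔ m hmA.1, mul_le_mul_of_nonneg_left hvm.le hc,
    mul_pos (mul_pos hε hE) (sub_pos.2 hkey)]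

theorem le_fderiv_of_gaussianBarrier_le {p q : ℂ} {R α ε : ℝ} (hq : ‖q - p‖ = R) (hvq : v q = 0)
    (hdiff : DifferentiableAt ℝ v q)
    (hlow : ∀ z ∈ closedBall p R \ ball p (R / 2), ε * gaussianBarrier p α R z ≤ v z) :
    2 * ε * α * R ^ 2 * Real.exp (-α * R ^ 2) ≤ fderiv ℝ v q (p - q) := by
  have hR : 0 ≤ R := hq ▸ norm_nonneg _
  set γ : ℝ → ℂ := fun t => q + t • (p - q)
  have hγ : HasDerivAt γ (p - q) 0 :=
    ((hasDerivAt_id' (0 : ℝ)).smul_const (p - q)).const_add q |>.congr_deriv (one_smul _ _)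
  have hγ0 : γ 0 = q := by simp [γ]
  have hnorm : ∀ t, ‖γ t - p‖ = |1 - t| * R := fun t => by
    rw [show γ t - p = (1 - t) • (q - p) by simp only [γ]; module, norm_smul, Real.norm_eq_abs, hq]
  set φ : ℝ → ℝ := fun t => ε * (Real.exp (-α * ((1 - t) * R) ^ 2) - Real.exp (-α * R ^ 2))
  have hφ : HasDerivAt φ (2 * ε * α * R ^ 2 * Real.exp (-α * R ^ 2)) 0 := by
    have := (((((hasDerivAt_id' (0 : ℝ)).const_sub 1).mul_const R).fun_pow 2).const_mul (-α)).exp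
      |>.sub_const (Real.exp (-α * R ^ 2)) |>.const_mul ε
    refine this.congr_deriv ?_
    simp only [sub_zero, one_mul, neg_mul, Nat.cast_ofNat, Nat.add_one_sub_one, pow_one, mul_neg,
      neg_neg]
    ring
  have hvγ : HasDerivAt (v ∘ γ) (fderiv ℝ v q (p - q)) 0 :=
    hdiff.hasFDerivAt.comp_hasDerivAt_of_eq 0 hγ hγ0.symm
  have hle : ∀ᶠ t in 𝓝[>] 0, (v ∘ γ - φ) 0 ≤ (v ∘ γ - φ) t := by
    filter_upwards [Ioo_mem_nhdsGT (by norm_num : (0 : ℝ) < 1 / 2)] with t ht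
    have hnt := hnorm t
    rw [abs_of_pos (by linarith [ht.2])] at hnt
    have hmem : γ t ∈ closedBall p R \ ball p (R / 2) := by
      simp only [Set.mem_sdiff, mem_closedBall, mem_ball, dist_eq_norm, hnt, not_lt]
      constructor <;> nlinarith [ht.1, ht.2]
    have := hlow _ hmem
    simp only [gaussianBarrier, hnt] at this
    simp only [Pi.sub_apply, Function.comp_apply, hγ0, hvq, φ, sub_zero, one_mul, sub_self,
      mul_zero]
    linarith
  linarith [(hvγ.sub hφ).nonneg_of_eventually_le_right hle]

theorem exists_pos_le_mul_mul_sq_sub_four {R : ℝ} (hR : 0 < R) (hc : 0 ≤ c) :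
    ∃ α > 0, c ≤ α * (α * R ^ 2 - 4) := by
  refine ⟨c + 5 / R ^ 2, by positivity, ?_⟩
  have : (c + 5 / R ^ 2) * R ^ 2 - 4 = c * R ^ 2 + 1 := by field_simp; ring
  rw [this]
  nlinarith [mul_nonneg (mul_nonneg hc (by positivity : (0 : ℝ) ≤ c + 5 / R ^ 2)) (sq_nonneg R),
    (by positivity : (0 : ℝ) < 5 / R ^ 2)]

theorem exists_nearest_zero_of_ne_zero {E : Type*} [MetricSpace E] [ProperSpace E] {f : E → ℝ}
    {z₀ p : E} {r : ℝ} (hcont : ContinuousOn f (closedBall z₀ r))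
    (hf0 : ∀ z ∈ closedBall z₀ r, 0 ≤ f z) (hz₀ : f z₀ = 0) (hp : p ∈ ball z₀ (r / 2))
    (hfp : f p ≠ 0) :
    ∃ q, 0 < dist p q ∧ closedBall p (dist p q) ⊆ ball z₀ r ∧ f q = 0 ∧
      ∀ x ∈ ball p (dist p q), 0 < f x := by
  rw [mem_ball] at hp
  set K := closedBall z₀ r ∩ f ⁻¹' {0}
  have hz₀K : z₀ ∈ K := ⟨mem_closedBall_self (by linarith [dist_nonneg (x := p) (y := z₀)]), hz₀⟩
  have hK : IsCompact K := (isCompact_closedBall z₀ r).of_isClosed_subset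
    (hcont.preimage_isClosed_of_isClosed isClosed_closedBall isClosed_singleton) inter_subset_left
  obtain ⟨q, hqK, hpq⟩ := hK.exists_infDist_eq_dist ⟨z₀, hz₀K⟩ p
  have hsub : closedBall p (dist p q) ⊆ ball z₀ r := fun x hx => by
    rw [mem_ball]
    linarith [dist_triangle x p z₀, mem_closedBall.1 hx, hpq ▸ infDist_le_dist_of_mem hz₀K]
  refine ⟨q, dist_pos.2 fun h => hfp (h ▸ hqK.2), hsub, hqK.2, fun x hx => ?_⟩
  have hx' : x ∈ closedBall z₀ r := ball_subset_closedBall (hsub (ball_subset_closedBall hx))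
  refine (hf0 x hx').lt_of_ne' fun h => (mem_ball'.1 hx).not_ge ?_
  exact hpq ▸ infDist_le_dist_of_mem (s := K) ⟨hx', h⟩

theorem eqOn_zero_of_planarLaplacian_le {z₀ : ℂ} {r : ℝ} (hc : 0 ≤ c)
    (hC2 : ∀ z ∈ closedBall z₀ r, ContDiffAt ℝ 2 v z) (hv0 : ∀ z ∈ closedBall z₀ r, 0 ≤ v z)
    (hΔ : ∀ z ∈ closedBall z₀ r, planarLaplacian v z ≤ c * v z) (hz₀ : v z₀ = 0) :
    EqOn v 0 (ball z₀ (r / 2)) := by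
  intro p hp
  by_contra hvp
  have hcont : ContinuousOn v (closedBall z₀ r) := fun z hz =>
    (hC2 z hz).continuousAt.continuousWithinAt
  obtain ⟨q, hR, hsub, hvq, hpos⟩ := exists_nearest_zero_of_ne_zero hcont hv0 hz₀ hp hvp
  set R := dist p q
  have hsub' : closedBall p R ⊆ closedBall z₀ r := hsub.trans ball_subset_closedBall
  have hq : q ∈ closedBall p R := mem_closedBall'.2 le_rfl
  have hsphere : sphere p (R / 2) ⊆ ball p R := sphere_subset_ball (by linarith)
  obtain ⟨x₀, hx₀, hx₀min⟩ := (isCompact_sphere p (R / 2)).exists_isMinOn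
    (NormedSpace.sphere_nonempty.2 (by positivity))
    (hcont.mono (hsphere.trans (ball_subset_closedBall.trans hsub')))
  have hε := hpos x₀ (hsphere hx₀)
  obtain ⟨α, hα, hαc⟩ := exists_pos_le_mul_mul_sq_sub_four hR hc
  have hlow := gaussianBarrier_le_of_planarLaplacian_le hc hα hαc hε
    (fun z hz => hC2 z (hsub' hz)) (fun z hz => hv0 z (hsub' hz)) (fun z hz => hΔ z (hsub' hz))
    (fun z hz => hx₀min hz)
  have hmin : IsLocalMin v q := by
    filter_upwards [isOpen_ball.mem_nhds (hsub hq)] with z hz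
    rw [hvq]
    exact hv0 z (ball_subset_closedBall hz)
  have := le_fderiv_of_gaussianBarrier_le (by rw [← dist_eq_norm, dist_comm]) hvq
    ((hC2 q (hsub' hq)).differentiableAt two_ne_zero) hlow
  rw [hmin.fderiv_eq_zero, zero_apply] at this
  have : 0 < 2 * v x₀ * α * R ^ 2 * Real.exp (-α * R ^ 2) := by positivity
  linarith

theorem eventually_eq_zero_of_planarLaplacian_le {z₀ : ℂ}
    (hv : ∀ᶠ z in 𝓝 z₀, ContDiffAt ℝ 2 v z ∧ 0 ≤ v z ∧ planarLaplacian v z ≤ c * v z)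
    (hz₀ : v z₀ = 0) : ∀ᶠ z in 𝓝 z₀, v z = 0 := by
  obtain ⟨r, hr, hsub⟩ := nhds_basis_closedBall.mem_iff.1 hv
  have hΔ : ∀ z ∈ closedBall z₀ r, planarLaplacian v z ≤ max c 0 * v z := fun z hz =>
    (hsub hz).2.2.trans (mul_le_mul_of_nonneg_right (le_max_left c 0) (hsub hz).2.1)
  filter_upwards [ball_mem_nhds z₀ (half_pos hr)] with z hz
  exact eqOn_zero_of_planarLaplacian_le (le_max_right c 0) (fun z hz => (hsub hz).1)
    (fun z hz => (hsub hz).2.1) hΔ hz₀ hz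

end MinimumPrinciple

theorem planarLaplacian_log_hyperbolicDensity_sub_log_le {ρ : ℂ → ℝ} {R : ℝ} {w : ℂ}
    (hR : 0 < R) (hw : w ∈ ball (0 : ℂ) R) (hρ : 0 < ρ w) (hC2 : ContDiffAt ℝ 2 ρ w)
    (hcurv : ρ w ^ 2 ≤ planarLaplacian (fun w => Real.log (ρ w)) w) :
    planarLaplacian (fun z => Real.log (hyperbolicDensity R z) - Real.log (ρ z)) w ≤
      2 * hyperbolicDensity R w ^ 2 * (Real.log (hyperbolicDensity R w) - Real.log (ρ w)) := by
  rw [planarLaplacian_sub (contDiffAt_log_hyperbolicDensity hR hw) (hC2.log hρ.ne'),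
    planarLaplacian_log_hyperbolicDensity hR hw]
  linarith [sq_sub_sq_le_two_mul_sq_mul_log_sub_log (hyperbolicDensity_pos hR hw) hρ]

theorem isOpen_setOf_eq_hyperbolicDensity {ρ : ℂ → ℝ} {R : ℝ} (hR : 0 < R)
    (hcont : ContinuousOn ρ (ball (0 : ℂ) R))
    (hC2 : ∀ z ∈ ball (0 : ℂ) R, 0 < ρ z → ContDiffAt ℝ 2 ρ z)
    (hcurv : ∀ z ∈ ball (0 : ℂ) R, 0 < ρ z →
      ρ z ^ 2 ≤ planarLaplacian (fun w => Real.log (ρ w)) z) :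
    IsOpen {z ∈ ball (0 : ℂ) R | ρ z = hyperbolicDensity R z} := by
  rw [isOpen_iff_mem_nhds]
  rintro z₁ ⟨hz₁, heq⟩
  set lam := hyperbolicDensity R
  set v : ℂ → ℝ := fun w => Real.log (lam w) - Real.log (ρ w)
  have hle := le_hyperbolicDensity_of_curvature_le hcont hC2 hcurv
  have hρ₁ : 0 < ρ z₁ := heq ▸ hyperbolicDensity_pos hR hz₁
  have hΩ : ∀ᶠ w in 𝓝 z₁, w ∈ ball (0 : ℂ) R ∧ 0 < ρ w :=
    (isOpen_ball.eventually_mem hz₁).and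
      (continuousAt_const.eventually_lt (hcont.continuousAt (isOpen_ball.mem_nhds hz₁)) hρ₁)
  have hbound : ∀ᶠ w in 𝓝 z₁, 2 * lam w ^ 2 < 2 * lam z₁ ^ 2 + 1 :=
    (((continuousOn_hyperbolicDensity.continuousAt (isOpen_ball.mem_nhds hz₁)).pow 2).const_mul 2)
      |>.eventually_lt continuousAt_const (lt_add_one _)
  have hv : ∀ᶠ w in 𝓝 z₁, ContDiffAt ℝ 2 v w ∧ 0 ≤ v w ∧
      planarLaplacian v w ≤ (2 * lam z₁ ^ 2 + 1) * v w := by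
    filter_upwards [hΩ, hbound] with w ⟨hw, hρw⟩ hbw
    have hv0 : 0 ≤ v w := sub_nonneg.2 (Real.log_le_log hρw (hle w hw))
    refine ⟨(contDiffAt_log_hyperbolicDensity hR hw).sub ((hC2 w hw hρw).log hρw.ne'), hv0, ?_⟩
    exact (planarLaplacian_log_hyperbolicDensity_sub_log_le hR hw hρw (hC2 w hw hρw)
      (hcurv w hw hρw)).trans (mul_le_mul_of_nonneg_right hbw.le hv0)
  filter_upwards [eventually_eq_zero_of_planarLaplacian_le hv (by simp [v, heq]), hΩ]
    with w hvw ⟨hw, hρw⟩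
  refine ⟨hw, Real.log_injOn_pos hρw (hyperbolicDensity_pos hR hw) ?_⟩
  simp only [v] at hvw
  linarith

theorem heins_rigidity_general (ρ : ℂ → ℝ)
    (hcont : ContinuousOn ρ (ball (0 : ℂ) 1))
    (hC2 : ∀ z ∈ ball (0 : ℂ) 1, 0 < ρ z → ContDiffAt ℝ 2 ρ z)
    (hcurv : ∀ z ∈ ball (0 : ℂ) 1, 0 < ρ z →
      -planarLaplacian (fun w => Real.log (ρ w)) z / ρ z ^ 2 ≤ -1)
    (heq : ∃ z₀ ∈ ball (0 : ℂ) 1, ρ z₀ = 2 / (1 - ‖z₀‖ ^ 2)) :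
    ∀ z ∈ ball (0 : ℂ) 1, ρ z = 2 / (1 - ‖z‖ ^ 2) := by
  have hcurv' : ∀ z ∈ ball (0 : ℂ) 1, 0 < ρ z →
      ρ z ^ 2 ≤ planarLaplacian (fun w => Real.log (ρ w)) z := fun z hz hρ => by
    simpa [neg_div, le_div_iff₀ (pow_pos hρ 2)] using hcurv z hz hρ
  simp only [← hyperbolicDensity_one] at heq ⊢
  obtain ⟨z₀, hz₀, h₀⟩ := heq
  exact isPreconnected_ball.eqOn_of_isOpen_setOf_eq isOpen_ball hcont
    continuousOn_hyperbolicDensity (isOpen_setOf_eq_hyperbolicDensity one_pos hcont hC2 hcurv')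
    hz₀ h₀

theorem heins_rigidity (ρ : ℂ → ℝ)
    (hnonneg : ∀ z ∈ ball (0 : ℂ) 1, 0 ≤ ρ z)
    (hcont : ContinuousOn ρ (ball (0 : ℂ) 1))
    (hdiscrete : ∀ z ∈ ball (0 : ℂ) 1, ρ z = 0 →
      ∃ U ∈ nhds z, ∀ w ∈ U, w ≠ z → ρ w ≠ 0)
    (hC2 : ∀ z ∈ ball (0 : ℂ) 1, 0 < ρ z → ContDiffAt ℝ 2 ρ z)
    (hcurv : ∀ z ∈ ball (0 : ℂ) 1, 0 < ρ z →
      -planarLaplacian (fun w => Real.log (ρ w)) z / ρ z ^ 2 ≤ -1)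
    (heq : ∃ z₀ ∈ ball (0 : ℂ) 1, ρ z₀ = 2 / (1 - ‖z₀‖ ^ 2)) :
    ∀ z ∈ ball (0 : ℂ) 1, ρ z = 2 / (1 - ‖z‖ ^ 2) :=
  heins_rigidity_general ρ hcont hC2 hcurv heq
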